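/- arXiv:2303.12610 — 3 statements merged into one kernel-verified Lean document; each statement's English description precedes it below -/
import Mathlib

section
/- Let U be a set, J : U → ℝ a cost function, E a finite index set, h_e : U → ℝ constraint functions, and μ*_e ≥ 0 multipliers. Suppose u* ∈ U satisfies the saddle-point (KKT) conditions: h_e(u*) ≤ 0 for all e ∈ E, Σ_{e∈E} μ*_e h_e(u*) = 0, and J(u*) + Σ_{e∈E} μ*_e h_e(u*) ≤ J(u) + Σ_{e∈E} μ*_e h_e(u) for all u ∈ U. If M_e ≥ μ*_e for all e ∈ E, then for every u ∈ U and every ρ : E → ℝ with ρ_e ≥ 0 and h_e(u) ≤ ρ_e for all e, one has J(u*) ≤ J(u) + Σ_{e∈E}(ρ_e² + M_e ρ_e). In other words, (u*, ρ = 0) minimizes the penalized relaxed problem min J(u) + Σ_e(ρ_e² + M_e ρ_e) subject to u ∈ U, ρ ≥ 0, h_e(u) ≤ ρ_e, and its optimal value equals the optimal value J(u*) of the unrelaxed problem. -/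
/-- Exact-penalty lemma (Lemma 1, first part): if `u*` satisfies the KKT/saddle-point
conditions for `min J(u)` s.t. `h_e(u) ≤ 0` with multipliers `μ*_e ≥ 0`, and the penalty
coefficients satisfy `M_e ≥ μ*_e`, then for every `u` and every relaxation `ρ ≥ 0` with
`h_e(u) ≤ ρ_e`, one has `J(u*) ≤ J(u) + Σ_e (ρ_e² + M_e ρ_e)`: the relaxed penalized
problem has the same optimal value `J(u*)` as the unrelaxed problem, attained at
`(u*, ρ = 0)`. -/
theorem exact_penalty {U : Type*} {E : Type*} [Fintype E]
    (J : U → ℝ) (h : E → U → ℝ) (μstar : E → ℝ) (M : E → ℝ) (ustar : U)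
    (hμ : ∀ e, 0 ≤ μstar e)
    (hfeas : ∀ e, h e ustar ≤ 0)
    (hcomp : ∑ e, μstar e * h e ustar = 0)
    (hsaddle : ∀ u : U, J ustar + ∑ e, μstar e * h e ustar ≤ J u + ∑ e, μstar e * h e u)
    (hM : ∀ e, μstar e ≤ M e) :
    ∀ (u : U) (ρ : E → ℝ), (∀ e, 0 ≤ ρ e) → (∀ e, h e u ≤ ρ e) →
      J ustar ≤ J u + ∑ e, ((ρ e) ^ 2 + M e * ρ e) := by
  intro u ρ hρ hhu
  have h1 : J ustar ≤ J u + ∑ e, μstar e * h e u := by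
    have := hsaddle u
    rw [hcomp] at this
    linarith
  have h2 : ∑ e, μstar e * h e u ≤ ∑ e, ((ρ e) ^ 2 + M e * ρ e) := by
    apply Finset.sum_le_sum
    intro e _
    have := hμ e
    have := hM e
    have := hρ e
    have := hhu e
    nlinarith [sq_nonneg (ρ e), mul_le_mul_of_nonneg_left (hhu e) (hμ e)]
  linarith
end

section
/- Let θ ∈ (0,1) be a real number, N ≥ 1 a natural number, and for each i = 1,…,N let P_i ≥ 0, M_i > 0, ε̃_i ≥ 0 and ε_i > 0 be real numbers; set P = Σ_{i=1}^N P_i. Let η ∈ ℕ satisfy θ^η M_i ε̃_i + ((θ − θ^{η+1})/(1−θ)) P_i ≤ M_i ε_i for every i = 1,…,N. Let (ρ_k)_{k≥0} be a sequence of nonnegative real numbers with ρ_{k+1} ≤ θ(P + ρ_k) for every k ≥ 0 and ρ_0 ≤ Σ_{i=1}^N M_i ε̃_i. Then ρ_η ≤ Σ_{i=1}^N M_i ε_i. -/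
open scoped BigOperators

/-- Deterministic core of Theorem 3: if the truncation parameter `η` satisfies the
local stopping criteria `θ^η M_i ε̃_i + ((θ − θ^{η+1})/(1−θ)) P_i ≤ M_i ε_i` for every
agent `i`, the recursion `ρ_{k+1} ≤ θ(P + ρ_k)` holds with `P = Σ_i P_i`, and the
initial aggregate relaxation satisfies `ρ_0 ≤ Σ_i M_i ε̃_i`, then after `η` iterations
`ρ_η ≤ Σ_i M_i ε_i`. -/
theorem truncated_relaxation_bound (θ : ℝ) (hθ : θ ∈ Set.Ioo (0 : ℝ) 1)
    (N : ℕ) (hN : 1 ≤ N) (P M εt ε : Fin N → ℝ)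
    (hP : ∀ i, 0 ≤ P i) (hM : ∀ i, 0 < M i) (hεt : ∀ i, 0 ≤ εt i) (hε : ∀ i, 0 < ε i)
    (η : ℕ)
    (hη : ∀ i, θ ^ η * (M i * εt i) + ((θ - θ ^ (η + 1)) / (1 - θ)) * P i ≤ M i * ε i)
    (ρ : ℕ → ℝ) (hρ : ∀ k, 0 ≤ ρ k)
    (hrec : ∀ k, ρ (k + 1) ≤ θ * ((∑ i, P i) + ρ k))
    (hinit : ρ 0 ≤ ∑ i, M i * εt i) :
    ρ η ≤ ∑ i, M i * ε i := by
  obtain ⟨hθ0, hθ1⟩ := hθ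
  set S : ℝ := ∑ i, P i with hS
  have hS0 : 0 ≤ S := Finset.sum_nonneg fun i _ => hP i
  have key : ∀ k, ρ k ≤ θ ^ k * ρ 0 + θ * (∑ j ∈ Finset.range k, θ ^ j) * S := by
    intro k
    induction k with
    | zero => simp
    | succ k ih =>
      calc ρ (k + 1) ≤ θ * (S + ρ k) := hrec k
        _ ≤ θ * (S + (θ ^ k * ρ 0 + θ * (∑ j ∈ Finset.range k, θ ^ j) * S)) := by
            nlinarith
        _ = θ ^ (k + 1) * ρ 0 + θ * (∑ j ∈ Finset.range (k + 1), θ ^ j) * S := by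
            rw [geom_sum_succ]
            ring
  have h1 : θ ≠ 1 := ne_of_lt hθ1
  have hne : (1 : ℝ) - θ ≠ 0 := by intro h; apply h1; linarith
  have hne' : θ - 1 ≠ 0 := by intro h; apply h1; linarith
  have hgeom : θ * (∑ j ∈ Finset.range η, θ ^ j) = (θ - θ ^ (η + 1)) / (1 - θ) := by
    rw [geom_sum_eq h1, ← mul_div_assoc, div_eq_div_iff hne' hne]
    ring
  have hbound := key η
  rw [hgeom] at hbound
  have hθη : 0 ≤ θ ^ η := pow_nonneg hθ0.le η
  calc ρ η ≤ θ ^ η * ρ 0 + ((θ - θ ^ (η + 1)) / (1 - θ)) * S := hbound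
    _ ≤ θ ^ η * (∑ i, M i * εt i) + ((θ - θ ^ (η + 1)) / (1 - θ)) * S := by
        nlinarith [mul_le_mul_of_nonneg_left hinit hθη]
    _ = ∑ i, (θ ^ η * (M i * εt i) + ((θ - θ ^ (η + 1)) / (1 - θ)) * P i) := by
        rw [Finset.sum_add_distrib, ← Finset.mul_sum, ← Finset.mul_sum]
    _ ≤ ∑ i, M i * ε i := Finset.sum_le_sum fun i _ => hη i
end

section
/- Let b : ℝ → ℝ be differentiable and let α : ℝ → ℝ satisfy α(y) < 0 for every y < 0 (in particular, this holds for any extended class-K function, i.e., any strictly increasing continuous function with α(0) = 0). Suppose b(0) ≥ 0 and b'(t) ≥ −α(b(t)) for every t ≥ 0. Then b(t) ≥ 0 for every t ≥ 0. -/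
/-- Scalar comparison lemma underlying Theorem 1 (forward invariance via CBFs):
let `b : ℝ → ℝ` be differentiable and `α : ℝ → ℝ` satisfy `α(y) < 0` for all
`y < 0` (as any extended class-K function does). If `b(0) ≥ 0` and
`b'(t) ≥ −α(b(t))` for every `t ≥ 0`, then `b(t) ≥ 0` for every `t ≥ 0`. -/
theorem cbf_comparison_nonneg (b α : ℝ → ℝ)
    (hb : Differentiable ℝ b)
    (hα : ∀ y : ℝ, y < 0 → α y < 0)
    (h0 : 0 ≤ b 0)
    (hderiv : ∀ t : ℝ, 0 ≤ t → deriv b t ≥ -α (b t)) :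
    ∀ t : ℝ, 0 ≤ t → 0 ≤ b t := by
  intro t₁ ht₁
  by_contra hneg
  push_neg at hneg
  set S : Set ℝ := Set.Icc 0 t₁ ∩ b ⁻¹' Set.Ici 0 with hS
  have hclosed : IsClosed S := isClosed_Icc.inter (isClosed_Ici.preimage hb.continuous)
  have hne : S.Nonempty := ⟨0, ⟨le_refl 0, ht₁⟩, h0⟩
  have hbdd : BddAbove S := ⟨t₁, fun x hx => hx.1.2⟩
  set s := sSup S with hs
  have hsS : s ∈ S := hclosed.csSup_mem hne hbdd
  have hs0 : 0 ≤ s := hsS.1.1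
  have hst : s ≤ t₁ := hsS.1.2
  have hbs : 0 ≤ b s := hsS.2
  have hslt : s < t₁ := lt_of_le_of_ne hst (fun h => absurd (h ▸ hbs) (not_le.mpr hneg))
  obtain ⟨c, hc, hcd⟩ := exists_deriv_eq_slope b hslt
    (hb.continuous.continuousOn) (hb.differentiableOn)
  have hc0 : 0 ≤ c := le_of_lt (lt_of_le_of_lt hs0 hc.1)
  have hbc : b c < 0 := by
    by_contra h
    push_neg at h
    have : c ∈ S := ⟨⟨hc0, le_of_lt hc.2⟩, h⟩
    exact absurd (le_csSup hbdd this) (not_le.mpr hc.1)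
  have hpos : 0 < deriv b c := lt_of_lt_of_le (by linarith [hα (b c) hbc]) (hderiv c hc0)
  rw [hcd] at hpos
  have : 0 < b t₁ - b s := by
    have := mul_pos hpos (sub_pos.mpr hslt)
    rwa [div_mul_cancel₀ _ (by linarith : t₁ - s ≠ 0)] at this
  linarith
end
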